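/- arXiv:0806.0342 — 2 statements merged into one kernel-verified Lean document; each statement's English description precedes it below -/
import Mathlib

section
/- Let p, p₀ ∈ ℝ^N with p ≠ 0 and |p₀| ≤ |p|/2. Then tr[(σ(p+p₀) − σ(p))²] ≤ 8 |p₀|²/|p|², where σ(q) = (q ⊗ q)/|q|². -/
noncomputable def sigmaMat {N : ℕ} (p : EuclideanSpace ℝ (Fin N)) : Matrix (Fin N) (Fin N) ℝ :=
  Matrix.of fun i j => p i * p j / ‖p‖ ^ 2

/-!
`σ(q)` is the orthogonal projection onto `ℝ q`, so `tr[(σ(q) − σ(p))²] = 2 − 2 tr[σ(p) σ(q)]`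
is twice the squared sine of the angle between `p` and `q`:
`2 (|p|²|q|² − ⟪p, q⟫²) / (|p|²|q|²)`. For `q = p + p₀` the numerator equals
`|p|²|p₀|² − ⟪p, p₀⟫² ≤ |p|²|p₀|²`, and `|q| ≥ |p|/2` bounds the denominator from below.
-/

open scoped RealInnerProductSpace

theorem norm_sq_mul_norm_add_sq_sub_inner_sq {E : Type*} [NormedAddCommGroup E]
    [InnerProductSpace ℝ E] (x y : E) :
    ‖x‖ ^ 2 * ‖x + y‖ ^ 2 - ⟪x, x + y⟫ ^ 2 = ‖x‖ ^ 2 * ‖y‖ ^ 2 - ⟪x, y⟫ ^ 2 := by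
  rw [norm_add_sq_real, inner_add_right, real_inner_self_eq_norm_sq]
  ring

theorem EuclideanSpace.real_inner_eq_sum {N : ℕ} (p q : EuclideanSpace ℝ (Fin N)) :
    ⟪p, q⟫ = ∑ i, p i * q i := by
  simp [PiLp.inner_apply, mul_comm]

theorem trace_sigmaMat_mul {N : ℕ} (p q : EuclideanSpace ℝ (Fin N)) :
    (sigmaMat p * sigmaMat q).trace = ⟪p, q⟫ ^ 2 / (‖p‖ ^ 2 * ‖q‖ ^ 2) := by
  simp only [Matrix.trace, Matrix.diag, Matrix.mul_apply, sigmaMat, Matrix.of_apply]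
  rw [EuclideanSpace.real_inner_eq_sum, sq (∑ i, p i * q i), Finset.sum_mul_sum, Finset.sum_div]
  refine Finset.sum_congr rfl fun i _ => ?_
  rw [Finset.sum_div]
  refine Finset.sum_congr rfl fun j _ => ?_
  rw [div_mul_div_comm]
  ring

theorem trace_sigmaMat_mul_self {N : ℕ} {p : EuclideanSpace ℝ (Fin N)} (hp : p ≠ 0) :
    (sigmaMat p * sigmaMat p).trace = 1 := by
  have : ‖p‖ ^ 2 ≠ 0 := by positivity
  rw [trace_sigmaMat_mul, real_inner_self_eq_norm_sq]
  field_simp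

theorem trace_sigmaMat_sub_mul_self {N : ℕ} {p q : EuclideanSpace ℝ (Fin N)} (hp : p ≠ 0)
    (hq : q ≠ 0) :
    ((sigmaMat q - sigmaMat p) * (sigmaMat q - sigmaMat p)).trace =
      2 * (‖p‖ ^ 2 * ‖q‖ ^ 2 - ⟪p, q⟫ ^ 2) / (‖p‖ ^ 2 * ‖q‖ ^ 2) := by
  have : ‖p‖ ^ 2 * ‖q‖ ^ 2 ≠ 0 := by positivity
  simp only [Matrix.sub_mul, Matrix.mul_sub, Matrix.trace_sub, trace_sigmaMat_mul_self hp,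
    trace_sigmaMat_mul_self hq, trace_sigmaMat_mul, real_inner_comm q p, mul_comm (‖q‖ ^ 2)]
  field_simp
  ring

/-- If `p ≠ 0` and `|p₀| ≤ |p|/2`, then `tr[(σ(p+p₀) − σ(p))²] ≤ 8|p₀|²/|p|²`. -/
theorem stmt_4 (N : ℕ) (p p₀ : EuclideanSpace ℝ (Fin N)) (hp : p ≠ 0)
    (h : ‖p₀‖ ≤ ‖p‖ / 2) :
    ((sigmaMat (p + p₀) - sigmaMat p) * (sigmaMat (p + p₀) - sigmaMat p)).trace ≤
      8 * ‖p₀‖ ^ 2 / ‖p‖ ^ 2 := by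
  have hpn : 0 < ‖p‖ := norm_pos_iff.2 hp
  have hq : ‖p‖ / 2 ≤ ‖p + p₀‖ := by linarith [norm_le_add_norm_add p p₀]
  have hqn : 0 < ‖p + p₀‖ := by linarith
  rw [trace_sigmaMat_sub_mul_self hp (norm_pos_iff.1 hqn), norm_sq_mul_norm_add_sq_sub_inner_sq]
  calc 2 * (‖p‖ ^ 2 * ‖p₀‖ ^ 2 - ⟪p, p₀⟫ ^ 2) / (‖p‖ ^ 2 * ‖p + p₀‖ ^ 2)
      ≤ 2 * (‖p‖ ^ 2 * ‖p₀‖ ^ 2) / (‖p‖ ^ 2 * ‖p + p₀‖ ^ 2) := by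
        gcongr; linarith [sq_nonneg ⟪p, p₀⟫]
    _ = 2 * ‖p₀‖ ^ 2 / ‖p + p₀‖ ^ 2 := by field_simp
    _ ≤ 2 * ‖p₀‖ ^ 2 / (‖p‖ / 2) ^ 2 := by gcongr
    _ = 8 * ‖p₀‖ ^ 2 / ‖p‖ ^ 2 := by field_simp; ring
end

section
/- Let A, B be symmetric N×N matrices and suppose that the 2N×2N block matrix with diagonal blocks A, −B and zero off-diagonal blocks is ≤ ζ times the block matrix [[I, −I], [−I, I]], for some ζ ≥ 0. Then for any nonzero p, q ∈ ℝ^N, tr(σ(p)A) − tr(σ(q)B) ≤ ζ · tr[(σ(p) − σ(q))²], where σ(p) = (p⊗p)/|p|². -/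
/-! `σ(p)` is the orthogonal projection `u uᵀ` onto the unit vector `u = p / |p|`, so
`tr(σ(p) A) = ⟨Au, u⟩` and `tr[(σ(p) − σ(q))²] = 2 − 2c²` with `c = ⟨u, v⟩`. Testing the hypothesis
at `(ξ, η) = (u, v)` and `(u, −v)`, whose squared distances are `2 − 2c` and `2 + 2c`, bounds the left-hand
side by `ζ (2 − 2|c|)`, and `|c| ≤ 1` gives `2 − 2|c| ≤ 2 − 2c²`. -/

open Matrix

section

variable {n : Type*} [Fintype n]

lemma sum_sub_sq_eq_dotProduct (u v : n → ℝ) :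
    ∑ i, (u i - v i) ^ 2 = u ⬝ᵥ u - 2 * (u ⬝ᵥ v) + v ⬝ᵥ v := by
  simp only [dotProduct, Finset.mul_sum, ← Finset.sum_sub_distrib, ← Finset.sum_add_distrib]
  exact Finset.sum_congr rfl fun i _ => by ring

lemma trace_vecMulVec_self_mul (u : n → ℝ) (A : Matrix n n ℝ) :
    (vecMulVec u u * A).trace = u ⬝ᵥ A *ᵥ u := by
  rw [vecMulVec_mul, trace_vecMulVec, dotProduct_comm, ← dotProduct_mulVec]

lemma trace_sub_vecMulVec_mul_self {u v : n → ℝ} (hu : u ⬝ᵥ u = 1) (hv : v ⬝ᵥ v = 1) :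
    ((vecMulVec u u - vecMulVec v v) * (vecMulVec u u - vecMulVec v v)).trace =
      2 - 2 * (u ⬝ᵥ v) ^ 2 := by
  simp only [sub_mul, mul_sub, trace_sub, vecMulVec_mul_vecMulVec, trace_vecMulVec,
    dotProduct_smul, smul_eq_mul, hu, hv, dotProduct_comm v u]
  ring

lemma dotProduct_mulVec_sub_le_of_le_sum_sub_sq {A B : Matrix n n ℝ} {ζ : ℝ} (hζ : 0 ≤ ζ)
    (h : ∀ ξ η : n → ℝ, ξ ⬝ᵥ A *ᵥ ξ - η ⬝ᵥ B *ᵥ η ≤ ζ * ∑ i, (ξ i - η i) ^ 2)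
    {u v : n → ℝ} (hu : u ⬝ᵥ u = 1) (hv : v ⬝ᵥ v = 1) :
    u ⬝ᵥ A *ᵥ u - v ⬝ᵥ B *ᵥ v ≤ ζ * (2 - 2 * (u ⬝ᵥ v) ^ 2) := by
  set c := u ⬝ᵥ v
  have hdist_v : ∑ i, (u i - v i) ^ 2 = 2 - 2 * c := by
    rw [sum_sub_sq_eq_dotProduct, hu, hv]; ring
  have hdist_neg_v : ∑ i, (u i - (-v) i) ^ 2 = 2 + 2 * c := by
    simp only [sum_sub_sq_eq_dotProduct, dotProduct_neg, neg_dotProduct, neg_neg, hu, hv]; ring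
  have hc_le : c ≤ 1 := by
    nlinarith [hdist_v ▸ Finset.sum_nonneg fun i _ => sq_nonneg (u i - v i)]
  have hc_ge : -1 ≤ c := by
    nlinarith [hdist_neg_v ▸ Finset.sum_nonneg fun i _ => sq_nonneg (u i - (-v) i)]
  have htest_v := h u v
  have htest_neg_v := h u (-v)
  rw [hdist_v] at htest_v
  rw [hdist_neg_v, mulVec_neg, dotProduct_neg, neg_dotProduct, neg_neg] at htest_neg_v
  rcases le_total 0 c with hc | hc
  · nlinarith [mul_nonneg hζ (mul_nonneg hc (sub_nonneg.2 hc_le))]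
  · nlinarith [mul_nonneg hζ (mul_nonneg (neg_nonneg.2 hc) (neg_le_iff_add_nonneg.1 hc_ge))]

end

lemma sigmaMat_eq_vecMulVec {N : ℕ} (p : EuclideanSpace ℝ (Fin N)) :
    sigmaMat p = vecMulVec (‖p‖⁻¹ • p).ofLp (‖p‖⁻¹ • p).ofLp := by
  ext i j
  simp only [sigmaMat, of_apply, vecMulVec_apply, PiLp.smul_apply, smul_eq_mul]
  ring

lemma dotProduct_self_inv_norm_smul {N : ℕ} {p : EuclideanSpace ℝ (Fin N)} (hp : p ≠ 0) :
    (‖p‖⁻¹ • p).ofLp ⬝ᵥ (‖p‖⁻¹ • p).ofLp = 1 := by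
  have hnorm : ‖‖p‖⁻¹ • p‖ = 1 := by
    rw [norm_smul, norm_inv, norm_norm, inv_mul_cancel₀ (norm_ne_zero_iff.2 hp)]
  have := real_inner_self_eq_norm_sq (‖p‖⁻¹ • p)
  rwa [hnorm, one_pow, EuclideanSpace.inner_eq_star_dotProduct, star_trivial] at this

theorem stmt_9_general (N : ℕ) (A B : Matrix (Fin N) (Fin N) ℝ)
    (ζ : ℝ) (hζ : 0 ≤ ζ)
    (h : ∀ ξ η : Fin N → ℝ, ξ ⬝ᵥ A.mulVec ξ - η ⬝ᵥ B.mulVec η ≤ ζ * ∑ i, (ξ i - η i) ^ 2)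
    (p q : EuclideanSpace ℝ (Fin N)) (hp : p ≠ 0) (hq : q ≠ 0) :
    (sigmaMat p * A).trace - (sigmaMat q * B).trace ≤
      ζ * ((sigmaMat p - sigmaMat q) * (sigmaMat p - sigmaMat q)).trace := by
  have hu := dotProduct_self_inv_norm_smul hp
  have hv := dotProduct_self_inv_norm_smul hq
  rw [sigmaMat_eq_vecMulVec p, sigmaMat_eq_vecMulVec q, trace_vecMulVec_self_mul,
    trace_vecMulVec_self_mul, trace_sub_vecMulVec_mul_self hu hv]
  exact dotProduct_mulVec_sub_le_of_le_sum_sub_sq hζ h hu hv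

/-- If `diag(A, −B) ≤ ζ [[I,−I],[−I,I]]` (i.e. `⟨Aξ,ξ⟩ − ⟨Bη,η⟩ ≤ ζ|ξ−η|²` for all `ξ, η`),
then `tr(σ(p)A) − tr(σ(q)B) ≤ ζ tr[(σ(p) − σ(q))²]` for nonzero `p, q`. -/
theorem stmt_9 (N : ℕ) (A B : Matrix (Fin N) (Fin N) ℝ) (hA : A.IsSymm) (hB : B.IsSymm)
    (ζ : ℝ) (hζ : 0 ≤ ζ)
    (h : ∀ ξ η : Fin N → ℝ, ξ ⬝ᵥ A.mulVec ξ - η ⬝ᵥ B.mulVec η ≤ ζ * ∑ i, (ξ i - η i) ^ 2)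
    (p q : EuclideanSpace ℝ (Fin N)) (hp : p ≠ 0) (hq : q ≠ 0) :
    (sigmaMat p * A).trace - (sigmaMat q * B).trace ≤
      ζ * ((sigmaMat p - sigmaMat q) * (sigmaMat p - sigmaMat q)).trace :=
  stmt_9_general N A B ζ hζ h p q hp hq
end
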